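/- Existence and uniqueness of the compatible connection (Lemma of Section 6): suppose the axial function α on Γ is 3-independent and satisfies axiom (A3) in the following form: for every oriented edge e, the images in the quotient group ℚ^n/ℤα_e of the multiset {α_{e'} : e' ∈ E_{i(e)}} and of the multiset {α_{e''} : e'' ∈ E_{t(e)}} coincide as multisets. Then there exists a unique connection ∇ on Γ compatible with α. -/

import Mathlib

open MvPolynomial TensorProduct

/-- A graph with an axial function: finite sets of vertices and oriented edges,
initial/terminal maps, a fixed-point-free orientation-reversing involution, and
weights `w e ∈ ℤ^n` with `w e ≠ 0` and `w (rev e) = - w e`. -/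
structure GKMGraph (n : ℕ) where
  V : Type
  E : Type
  fintV : Fintype V
  fintE : Fintype E
  i : E → V
  t : E → V
  rev : E → E
  rev_rev : ∀ e, rev (rev e) = e
  rev_ne : ∀ e, rev e ≠ e
  i_rev : ∀ e, i (rev e) = t e
  t_rev : ∀ e, t (rev e) = i e
  w : E → Fin n → ℤ
  w_ne : ∀ e, w e ≠ 0
  w_rev : ∀ e, w (rev e) = - w e

attribute [instance] GKMGraph.fintV GKMGraph.fintE

/-- The weight `a ∈ ℤ^n` regarded as the linear form `a₁x₁ + ⋯ + aₙxₙ ∈ ℝ[x₁,…,xₙ]`. -/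
noncomputable def wtPoly {n : ℕ} (a : Fin n → ℤ) : MvPolynomial (Fin n) ℝ :=
  ∑ j, MvPolynomial.C (a j : ℝ) * MvPolynomial.X j

/-- The weight of an edge regarded as a vector in `ℚ^n`. -/
def GKMGraph.wQ {n : ℕ} (G : GKMGraph n) (e : G.E) : Fin n → ℚ :=
  fun j => (G.w e j : ℚ)

/-- `Γ` is `d`-valent: every vertex has exactly `d` outgoing oriented edges. -/
def GKMGraph.Valent {n : ℕ} (G : GKMGraph n) (d : ℕ) : Prop :=
  ∀ p : G.V, {e : G.E | G.i e = p}.ncard = d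

/-- The axial function is 2-independent: the weights of any two distinct edges
issuing from the same vertex are `ℚ`-linearly independent. -/
def GKMGraph.TwoIndep {n : ℕ} (G : GKMGraph n) : Prop :=
  ∀ e e' : G.E, G.i e = G.i e' → e ≠ e' →
    LinearIndependent ℚ ![G.wQ e, G.wQ e']

/-- `nab` is a connection on `Γ`: for each oriented edge `e` it gives a bijection
`∇_e : E_{i(e)} → E_{t(e)}` with `∇_{ē} = (∇_e)⁻¹`.  (Values of `nab e` outside
`E_{i(e)}` are irrelevant.) -/
def GKMGraph.IsConnection {n : ℕ} (G : GKMGraph n) (nab : G.E → G.E → G.E) : Prop :=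
  (∀ e : G.E, Set.BijOn (nab e) {e' | G.i e' = G.i e} {e'' | G.i e'' = G.t e}) ∧
  (∀ e e' : G.E, G.i e' = G.i e → nab (G.rev e) (nab e e') = e')

/-- The connection `nab` is compatible with the axial function: for every edge `e`
and every `e' ∈ E_{i(e)}`, the difference `α_{∇_e e'} - α_{e'}` is an integer
multiple of `α_e`. -/
def GKMGraph.Compatible {n : ℕ} (G : GKMGraph n) (nab : G.E → G.E → G.E) : Prop :=
  ∀ e e' : G.E, G.i e' = G.i e → ∃ m : ℤ, G.w (nab e e') = G.w e' + m • G.w e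

/-- The pairing `⟨α_e, ξ⟩` of the weight of an edge with a vector `ξ ∈ ℝ^n`. -/
noncomputable def GKMGraph.pairing {n : ℕ} (G : GKMGraph n) (e : G.E) (ξ : Fin n → ℝ) : ℝ :=
  ∑ j, (G.w e j : ℝ) * ξ j

/-- `ξ ∈ ℝ^n` is generic if `⟨α_e, ξ⟩ ≠ 0` for every edge `e`. -/
def GKMGraph.Generic {n : ℕ} (G : GKMGraph n) (ξ : Fin n → ℝ) : Prop :=
  ∀ e : G.E, G.pairing e ξ ≠ 0

/-- `σ_p(ξ)`: the number of edges issuing from `p` with `⟨α_e, ξ⟩ < 0`. -/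
noncomputable def GKMGraph.sigma {n : ℕ} (G : GKMGraph n) (p : G.V) (ξ : Fin n → ℝ) : ℕ :=
  {e : G.E | G.i e = p ∧ G.pairing e ξ < 0}.ncard

/-- The combinatorial Betti number `β_k(Γ;ξ) = #{p ∈ V : σ_p(ξ) = k}`. -/
noncomputable def GKMGraph.betti {n : ℕ} (G : GKMGraph n) (ξ : Fin n → ℝ) (k : ℕ) : ℕ :=
  {p : G.V | G.sigma p ξ = k}.ncard

open scoped Classical

/-- The axial function is 3-independent: for every vertex `p`, the weights of any
(at most three) distinct edges issuing from `p` are `ℚ`-linearly independent. -/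
def GKMGraph.ThreeIndep {n : ℕ} (G : GKMGraph n) : Prop :=
  ∀ p : G.V, ∀ s : Finset G.E, (∀ e ∈ s, G.i e = p) → s.card ≤ 3 →
    LinearIndependent ℚ (fun e : s => G.wQ e)

/-- Axiom (A3) in multiset form: for every oriented edge `e`, the multiset of images
in `ℚ^n/ℤα_e` of the weights of the edges issuing from `i(e)` coincides with the
corresponding multiset for `t(e)`. -/
def GKMGraph.AxiomA3 {n : ℕ} (G : GKMGraph n) : Prop :=
  ∀ e : G.E,
    Multiset.map
      (fun e' => Submodule.Quotient.mk (p := Submodule.span ℤ {G.wQ e}) (G.wQ e'))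
      (Finset.univ.filter (fun e' => G.i e' = G.i e)).val =
    Multiset.map
      (fun e'' => Submodule.Quotient.mk (p := Submodule.span ℤ {G.wQ e}) (G.wQ e''))
      (Finset.univ.filter (fun e'' => G.i e'' = G.t e)).val

/-!
By 3-independence, the weights of distinct edges issuing from `i(e)` have distinct classes modulo
`ℤα_e`: a relation `α_x - α_y = m α_e` among at most three edges at one vertex is impossible. The
same holds at `t(e)`, since `ℤα_ē = ℤα_e` and `i(ē) = t(e)`. Axiom (A3) says that both vertices
carry the same set of classes, so `∇_e` has to send `e'` to the unique edge at `t(e)` in the class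
of `α_{e'}`; compatibility is precisely this equality of classes, which gives uniqueness, and
`∇_ē ∘ ∇_e` preserves classes, hence is the identity.
-/

namespace Set

variable {α β : Type*} [Nonempty α] {f : α → β} {s t : Set α}

theorem bijOn_invFunOn_comp_of_image_eq (hs : InjOn f s) (ht : InjOn f t) (h : f '' s = f '' t) :
    BijOn (Function.invFunOn f t ∘ f) s t :=
  (ht.bijOn_image.symm ht.bijOn_image.invOn_invFunOn.symm).comp
    (h ▸ hs.bijOn_image : BijOn f s (f '' t))

end Set

theorem LinearIndepOn.eq_of_sub_eq_smul {K V ι : Type*} [DivisionRing K] [AddCommGroup V]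
    [Module K V] {v : ι → V} {x y f : ι} (hv : LinearIndepOn K v {x, y, f}) {c : K}
    (h : v x - v y = c • v f) : x = y := by
  wlog hxf : x ≠ f generalizing x y c
  · obtain rfl : x = f := not_not.1 hxf
    by_cases hyx : y = x
    · exact hyx.symm
    refine (this (c := -c) ?_ ?_ hyx).symm
    · simpa only [Set.insert_comm] using hv
    · rw [neg_smul, ← h, neg_sub]
  by_contra hxy
  have hx : x ∉ ({y, f} : Set ι) := by simp [hxy, hxf]
  refine ((linearIndepOn_insert hx).1 hv).2 ?_
  rw [sub_eq_iff_eq_add'.1 h]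
  exact add_mem (Submodule.subset_span (Set.mem_image_of_mem v (by simp)))
    (Submodule.smul_mem _ _ (Submodule.subset_span (Set.mem_image_of_mem v (by simp))))

namespace GKMGraph

variable {n : ℕ} {G : GKMGraph n}

variable (G) in
def wClass (e x : G.E) : (Fin n → ℚ) ⧸ Submodule.span ℤ {G.wQ e} :=
  Submodule.Quotient.mk (G.wQ x)

theorem wClass_eq_wClass_iff {e x y : G.E} :
    G.wClass e x = G.wClass e y ↔ ∃ m : ℤ, G.w x = G.w y + m • G.w e := by
  rw [wClass, wClass, Submodule.Quotient.eq, Submodule.mem_span_singleton]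
  simp only [funext_iff, GKMGraph.wQ, Pi.add_apply, Pi.sub_apply, Pi.smul_apply]
  simp only [zsmul_eq_mul, smul_eq_mul]
  refine exists_congr fun m => forall_congr' fun j => ?_
  rw [eq_sub_iff_add_eq', eq_comm]
  norm_cast

theorem wQ_rev (e : G.E) : G.wQ (G.rev e) = -G.wQ e := by
  ext j
  simp [GKMGraph.wQ, G.w_rev e]

theorem wClass_rev_eq_wClass_rev_iff {e x y : G.E} :
    G.wClass (G.rev e) x = G.wClass (G.rev e) y ↔ G.wClass e x = G.wClass e y := by
  rw [wClass, wClass, wClass, wClass, Submodule.Quotient.eq, Submodule.Quotient.eq, wQ_rev,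
    ← Set.neg_singleton, Submodule.span_neg]

theorem ThreeIndep.wClass_injOn_source (h3 : G.ThreeIndep) (e : G.E) :
    Set.InjOn (G.wClass e) {x | G.i x = G.i e} := by
  intro x hx y hy hxy
  obtain ⟨m, hm⟩ := Submodule.mem_span_singleton.1 (Submodule.Quotient.eq _ |>.1 hxy)
  have hv : LinearIndepOn ℚ G.wQ ({x, y, e} : Finset G.E) :=
    h3 (G.i e) {x, y, e} (by simp [hx.out, hy.out]) Finset.card_le_three
  rw [Finset.coe_insert, Finset.coe_insert, Finset.coe_singleton] at hv
  exact hv.eq_of_sub_eq_smul (c := (m : ℚ)) (by rw [← hm, Int.cast_smul_eq_zsmul])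

theorem ThreeIndep.wClass_injOn_target (h3 : G.ThreeIndep) (e : G.E) :
    Set.InjOn (G.wClass e) {x | G.i x = G.t e} := fun _ hx _ hy hxy =>
  h3.wClass_injOn_source (G.rev e) (G.i_rev e ▸ hx) (G.i_rev e ▸ hy)
    (wClass_rev_eq_wClass_rev_iff.2 hxy)

theorem AxiomA3.image_wClass_source (hA3 : G.AxiomA3) (e : G.E) :
    G.wClass e '' {x | G.i x = G.i e} = G.wClass e '' {x | G.i x = G.t e} := by
  ext c
  simpa [wClass, eq_comm] using congrArg (c ∈ ·) (hA3 e)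

theorem compatible_iff {nab : G.E → G.E → G.E} :
    G.Compatible nab ↔ ∀ e e', G.i e' = G.i e → G.wClass e (nab e e') = G.wClass e e' := by
  simp only [Compatible, wClass_eq_wClass_iff]

variable (G) in
noncomputable def canonicalConnection (e : G.E) : G.E → G.E :=
  haveI : Nonempty G.E := ⟨e⟩
  Function.invFunOn (G.wClass e) {x | G.i x = G.t e} ∘ G.wClass e

theorem canonicalConnection_bijOn (h3 : G.ThreeIndep) (hA3 : G.AxiomA3) (e : G.E) :
    Set.BijOn (G.canonicalConnection e) {x | G.i x = G.i e} {x | G.i x = G.t e} :=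
  haveI : Nonempty G.E := ⟨e⟩
  Set.bijOn_invFunOn_comp_of_image_eq (h3.wClass_injOn_source e) (h3.wClass_injOn_target e)
    (hA3.image_wClass_source e)

theorem wClass_canonicalConnection (hA3 : G.AxiomA3) {e e' : G.E} (he' : G.i e' = G.i e) :
    G.wClass e (G.canonicalConnection e e') = G.wClass e e' :=
  haveI : Nonempty G.E := ⟨e⟩
  Function.invFunOn_eq (hA3.image_wClass_source e ▸ Set.mem_image_of_mem _ he' :
    G.wClass e e' ∈ G.wClass e '' {x | G.i x = G.t e})

theorem canonicalConnection_compatible (hA3 : G.AxiomA3) : G.Compatible G.canonicalConnection :=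
  compatible_iff.2 fun _ _ => wClass_canonicalConnection hA3

theorem canonicalConnection_rev_canonicalConnection (h3 : G.ThreeIndep) (hA3 : G.AxiomA3)
    {e e' : G.E} (he' : G.i e' = G.i e) :
    G.canonicalConnection (G.rev e) (G.canonicalConnection e e') = e' := by
  set f := G.canonicalConnection e e'
  have hf : G.i f = G.i (G.rev e) := by
    rw [G.i_rev]
    exact (canonicalConnection_bijOn h3 hA3 e).mapsTo he'
  have hg : G.i (G.canonicalConnection (G.rev e) f) = G.i e :=
    G.t_rev e ▸ (canonicalConnection_bijOn h3 hA3 (G.rev e)).mapsTo hf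
  refine h3.wClass_injOn_source e hg he' ?_
  rw [← wClass_rev_eq_wClass_rev_iff, wClass_canonicalConnection hA3 hf,
    wClass_rev_eq_wClass_rev_iff]
  exact wClass_canonicalConnection hA3 he'

theorem canonicalConnection_isConnection (h3 : G.ThreeIndep) (hA3 : G.AxiomA3) :
    G.IsConnection G.canonicalConnection :=
  ⟨canonicalConnection_bijOn h3 hA3, fun _ _ => canonicalConnection_rev_canonicalConnection h3 hA3⟩

theorem ThreeIndep.connection_eq_of_compatible (h3 : G.ThreeIndep) {nab nab' : G.E → G.E → G.E}
    (hc : G.IsConnection nab) (hc' : G.IsConnection nab') (h : G.Compatible nab)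
    (h' : G.Compatible nab') {e e' : G.E} (he' : G.i e' = G.i e) : nab e e' = nab' e e' :=
  h3.wClass_injOn_target e ((hc.1 e).mapsTo he') ((hc'.1 e).mapsTo he')
    ((compatible_iff.1 h e e' he').trans (compatible_iff.1 h' e e' he').symm)

end GKMGraph

/-- existence and uniqueness of the compatible connection.  If `α` is
3-independent and satisfies axiom (A3), then there is a connection on `Γ` compatible
with `α`, and it is unique (any two such agree on `E_{i(e)}` for every edge `e`). -/
theorem compatible_connection_exists_unique {n : ℕ} (G : GKMGraph n)
    (h3 : G.ThreeIndep) (hA3 : G.AxiomA3) :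
    ∃ nab : G.E → G.E → G.E,
      (G.IsConnection nab ∧ G.Compatible nab) ∧
      ∀ nab' : G.E → G.E → G.E, G.IsConnection nab' → G.Compatible nab' →
        ∀ e e' : G.E, G.i e' = G.i e → nab e e' = nab' e e' := by
  have hc := G.canonicalConnection_isConnection h3 hA3
  have hcomp := G.canonicalConnection_compatible hA3
  exact ⟨G.canonicalConnection, ⟨hc, hcomp⟩, fun _ hc' hcomp' _ _ =>
    h3.connection_eq_of_compatible hc hc' hcomp hcomp'⟩
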